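/- Along trajectories of the closed-loop error dynamics with the control law τ = −k_Q ε − k_Ω Ω_err + I Ω̇_des − I(Ω × Ω_des) + Ω × IΩ, the time derivative of the Lyapunov function V = k_Q ‖q_err − q_err_des‖² + (1/2) Ω_errᵀ I Ω_err satisfies V̇ = −k_Ω Ω_errᵀ Ω_err ≤ 0. -/

import Mathlib

/-!
The control law cancels the gyroscopic and feed-forward terms, reducing the error dynamics to
`I Ω̇_err = −k_Q ε − k_Ω Ω_err`. The quaternion kinematics give `d/dt ‖q_err − 1‖² = ε ⬝ Ω_err`,
so in `V̇ = k_Q ε ⬝ Ω_err + Ω_err ⬝ I Ω̇_err` (using the symmetry of `I`) the `k_Q` terms cancel.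
-/

open Matrix

/-- The pure quaternion `(0, Ω)` with vector part `Ω ∈ ℝ³`. -/
def pureQuat (v : Fin 3 → ℝ) : Quaternion ℝ := ⟨0, v 0, v 1, v 2⟩

section VectorCalculus

variable {m n : Type*} [Fintype n] {v w : ℝ → n → ℝ} {v' w' : n → ℝ} {t : ℝ}

theorem HasDerivAt.dotProduct (hv : HasDerivAt v v' t) (hw : HasDerivAt w w' t) :
    HasDerivAt (fun s => v s ⬝ᵥ w s) (v' ⬝ᵥ w t + v t ⬝ᵥ w') t := by
  rw [hasDerivAt_pi] at hv hw
  simp only [_root_.dotProduct, ← Finset.sum_add_distrib]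
  exact HasDerivAt.fun_sum fun i _ => (hv i).mul (hw i)

theorem HasDerivAt.mulVec (A : Matrix m n ℝ) (hv : HasDerivAt v v' t) :
    HasDerivAt (fun s => A *ᵥ v s) (A *ᵥ v') t := by
  rw [hasDerivAt_pi]
  intro i
  simpa [Matrix.mulVec] using (hasDerivAt_const t (A i)).dotProduct hv

theorem HasDerivAt.dotProduct_mulVec_self {A : Matrix n n ℝ} (hA : A.IsSymm)
    (hv : HasDerivAt v v' t) :
    HasDerivAt (fun s => v s ⬝ᵥ A *ᵥ v s) (2 * (v t ⬝ᵥ A *ᵥ v')) t := by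
  have hswap : v' ⬝ᵥ A *ᵥ v t = v t ⬝ᵥ A *ᵥ v' := by
    rw [dotProduct_comm, ← vecMul_transpose, ← dotProduct_mulVec, hA.eq]
  convert hv.dotProduct (hv.mulVec A) using 1
  rw [hswap, two_mul]

end VectorCalculus

-- `⟪q, q * p⟫ = ‖q‖² * p.re` vanishes for a pure quaternion `p`, leaving `-(q * p).re`.
theorem Quaternion.inner_sub_one_mul_pureQuat (q : Quaternion ℝ) (w : Fin 3 → ℝ) :
    inner ℝ (q - 1) (q * pureQuat w) = ![q.imI, q.imJ, q.imK] ⬝ᵥ w := by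
  simp only [Quaternion.inner_def, Quaternion.re_mul, Quaternion.re_sub,
    Quaternion.re_star, Quaternion.imI_star, Quaternion.imJ_star, Quaternion.imK_star,
    Quaternion.imI_mul, Quaternion.imJ_mul, Quaternion.imK_mul, Quaternion.imI_sub,
    Quaternion.imJ_sub, Quaternion.imK_sub, Quaternion.re_one, Quaternion.imI_one,
    Quaternion.imJ_one, Quaternion.imK_one, cons_dotProduct, dotProduct_of_isEmpty]
  simp only [pureQuat, vecHead, vecTail, Function.comp_apply, Fin.succ_zero_eq_one,
    Fin.succ_one_eq_two]
  ring

theorem hasDerivAt_norm_sub_one_sq {q : ℝ → Quaternion ℝ} {w : Fin 3 → ℝ} {t : ℝ}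
    (hq : HasDerivAt q ((1 / 2 : ℝ) • (q t * pureQuat w)) t) :
    HasDerivAt (fun s => ‖q s - 1‖ ^ 2) (![(q t).imI, (q t).imJ, (q t).imK] ⬝ᵥ w) t := by
  convert (hq.sub_const 1).norm_sq using 1
  rw [inner_smul_right, Quaternion.inner_sub_one_mul_pureQuat]
  ring

theorem closed_loop_error_dynamics {R n : Type*} [CommRing R] [Fintype n]
    (A : Matrix n n R) (kQ kΩ : R) (ε w dw dΩ dΩdes c d τ : n → R)
    (hτ : τ = -kQ • ε - kΩ • w + A *ᵥ dΩdes - A *ᵥ c + d)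
    (hdyn : A *ᵥ dΩ = τ - d) (herr : dw = dΩ - dΩdes + c) :
    A *ᵥ dw = -kQ • ε - kΩ • w := by
  rw [herr, mulVec_add, mulVec_sub, hdyn, hτ]
  abel

theorem lyapunov_derivative_along_closed_loop_general
    -- inertia matrix, symmetric positive definite
    (I : Matrix (Fin 3) (Fin 3) ℝ) (hIsymm : I.IsSymm)
    -- scalar gains
    (kQ kΩ : ℝ) (hkΩ : 0 < kΩ)
    -- angular velocity, desired angular velocity, their derivatives
    (Ω Ωdes dΩ dΩdes : ℝ → Fin 3 → ℝ)
    -- angular velocity error `Ω_err = Ω − Ω_des` with its error dynamics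
    -- `Ω̇_err = Ω̇ − Ω̇_des + Ω × Ω_des`
    (Ωerr dΩerr : ℝ → Fin 3 → ℝ)
    (hΩerrDeriv : ∀ t i, HasDerivAt (fun s => Ωerr s i) (dΩerr t i) t)
    (herrdyn : ∀ t, dΩerr t = dΩ t - dΩdes t + Ω t ⨯₃ Ωdes t)
    -- unit error quaternion with vector part ε, satisfying the error kinematics
    (qerr : ℝ → Quaternion ℝ)
    (ε : ℝ → Fin 3 → ℝ)
    (hε : ∀ t, ε t = ![(qerr t).imI, (qerr t).imJ, (qerr t).imK])
    (hqkin : ∀ t, HasDerivAt qerr ((1 / 2 : ℝ) • (qerr t * pureQuat (Ωerr t))) t)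
    -- control law
    (τ : ℝ → Fin 3 → ℝ)
    (hτ : ∀ t, τ t = -kQ • ε t - kΩ • Ωerr t + I *ᵥ dΩdes t
        - I *ᵥ (Ω t ⨯₃ Ωdes t) + Ω t ⨯₃ (I *ᵥ Ω t))
    -- rigid body attitude dynamics `I Ω̇ = τ − Ω × I Ω`
    (hdyn : ∀ t, I *ᵥ dΩ t = τ t - Ω t ⨯₃ (I *ᵥ Ω t)) :
    ∀ t, HasDerivAt
        (fun s => kQ * ‖qerr s - 1‖ ^ 2 + (1 / 2) * (Ωerr s ⬝ᵥ (I *ᵥ Ωerr s)))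
        (-kΩ * (Ωerr t ⬝ᵥ Ωerr t)) t ∧
      -kΩ * (Ωerr t ⬝ᵥ Ωerr t) ≤ 0 := by
  intro t
  have hclosed : I *ᵥ dΩerr t = -kQ • ε t - kΩ • Ωerr t :=
    closed_loop_error_dynamics I kQ kΩ _ _ _ _ _ _ _ _ (hτ t) (hdyn t) (herrdyn t)
  have hV := ((hasDerivAt_norm_sub_one_sq (hqkin t)).const_mul kQ).add
    (((hasDerivAt_pi.2 (hΩerrDeriv t)).dotProduct_mulVec_self hIsymm).const_mul (1 / 2 : ℝ))
  refine ⟨hV.congr_deriv ?_, ?_⟩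
  · rw [← hε, hclosed, dotProduct_sub, dotProduct_smul, dotProduct_smul,
      dotProduct_comm (Ωerr t) (ε t)]
    simp only [smul_eq_mul]
    ring
  · have hnonneg : 0 ≤ Ωerr t ⬝ᵥ Ωerr t := by simpa using dotProduct_self_star_nonneg (Ωerr t)
    exact mul_nonpos_of_nonpos_of_nonneg (neg_nonpos.2 hkΩ.le) hnonneg

/-- Along trajectories of the closed-loop error dynamics with the control law
`τ = −k_Q ε − k_Ω Ω_err + I Ω̇_des − I (Ω × Ω_des) + Ω × I Ω`, the Lyapunov function
`V = k_Q ‖q_err − 1‖² + (1/2) Ω_errᵀ I Ω_err` satisfies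
`V̇ = −k_Ω Ω_errᵀ Ω_err ≤ 0`. -/
theorem lyapunov_derivative_along_closed_loop
    -- inertia matrix, symmetric positive definite
    (I : Matrix (Fin 3) (Fin 3) ℝ) (hIsymm : I.IsSymm) (hIpd : I.PosDef)
    -- scalar gains
    (kQ kΩ : ℝ) (hkQ : 0 < kQ) (hkΩ : 0 < kΩ)
    -- angular velocity, desired angular velocity, their derivatives
    (Ω Ωdes dΩ dΩdes : ℝ → Fin 3 → ℝ)
    (hΩ : ∀ t i, HasDerivAt (fun s => Ω s i) (dΩ t i) t)
    (hΩdes : ∀ t i, HasDerivAt (fun s => Ωdes s i) (dΩdes t i) t)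
    -- angular velocity error `Ω_err = Ω − Ω_des` with its error dynamics
    -- `Ω̇_err = Ω̇ − Ω̇_des + Ω × Ω_des`
    (Ωerr dΩerr : ℝ → Fin 3 → ℝ) (hΩerr : ∀ t, Ωerr t = Ω t - Ωdes t)
    (hΩerrDeriv : ∀ t i, HasDerivAt (fun s => Ωerr s i) (dΩerr t i) t)
    (herrdyn : ∀ t, dΩerr t = dΩ t - dΩdes t + Ω t ⨯₃ Ωdes t)
    -- unit error quaternion with vector part ε, satisfying the error kinematics
    (qerr : ℝ → Quaternion ℝ) (hqunit : ∀ t, ‖qerr t‖ = 1)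
    (ε : ℝ → Fin 3 → ℝ)
    (hε : ∀ t, ε t = ![(qerr t).imI, (qerr t).imJ, (qerr t).imK])
    (hqkin : ∀ t, HasDerivAt qerr ((1 / 2 : ℝ) • (qerr t * pureQuat (Ωerr t))) t)
    -- control law
    (τ : ℝ → Fin 3 → ℝ)
    (hτ : ∀ t, τ t = -kQ • ε t - kΩ • Ωerr t + I *ᵥ dΩdes t
        - I *ᵥ (Ω t ⨯₃ Ωdes t) + Ω t ⨯₃ (I *ᵥ Ω t))
    -- rigid body attitude dynamics `I Ω̇ = τ − Ω × I Ω`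
    (hdyn : ∀ t, I *ᵥ dΩ t = τ t - Ω t ⨯₃ (I *ᵥ Ω t)) :
    ∀ t, HasDerivAt
        (fun s => kQ * ‖qerr s - 1‖ ^ 2 + (1 / 2) * (Ωerr s ⬝ᵥ (I *ᵥ Ωerr s)))
        (-kΩ * (Ωerr t ⬝ᵥ Ωerr t)) t ∧
      -kΩ * (Ωerr t ⬝ᵥ Ωerr t) ≤ 0 :=
  lyapunov_derivative_along_closed_loop_general I hIsymm kQ kΩ hkΩ Ω Ωdes dΩ dΩdes Ωerr dΩerr
    hΩerrDeriv herrdyn qerr ε hε hqkin τ hτ hdyn
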